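/- Let H be a finite group with generating set T, and let G = H ⋊ Z_2 with generating set S = (T × {e}) ∪ {(e_H, s)} where s generates Z_2. Then Player 1 has a winning strategy for RAV(G,S). -/

import Mathlib

namespace RelatorGames

variable {G : Type*} [Group G]

/-- The letters available in the relator games: elements of `S` and their inverses. -/
def letters (S : Set G) : Set G := S ∪ (fun g => g⁻¹) '' S

/-- Evaluate a history of moves (most recent letter first) to a group element:
the group element represented by the word built so far. -/
def eval (h : List G) : G := h.reverse.prod

/-- A move `m` is legal after history `h`: it is a letter of `S ∪ S⁻¹` and it is not
the inverse of the immediately preceding letter (no backtracking). -/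
def LegalMove (S : Set G) (h : List G) (m : G) : Prop :=
  m ∈ letters S ∧ ∀ p ∈ h.head?, m ≠ p⁻¹

/-- Appending `m` to the history `h` produces a word equal in `G` to some earlier
prefix of the word (equivalently, the walk in the Cayley graph revisits a vertex). -/
def ClosesCycle (h : List G) (m : G) : Prop :=
  ∃ t, t <:+ h ∧ eval t = eval (m :: h)

/-- A strategy: a choice of next letter given the history (most recent letter first). -/
abbrev Strategy (G : Type*) := List G → G

/-- The sequence of histories arising when the first player (moving at even steps)
uses `σ` and the second player (moving at odd steps) uses `τ`. -/
def hist (σ τ : Strategy G) : ℕ → List G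
  | 0 => []
  | k + 1 =>
      (if k % 2 = 0 then σ (hist σ τ k) else τ (hist σ τ k)) :: hist σ τ k

/-- The move made at step `k` in the play of `σ` against `τ`. -/
def moveAt (σ τ : Strategy G) (k : ℕ) : G :=
  if k % 2 = 0 then σ (hist σ τ k) else τ (hist σ τ k)

/-- Step `j` is uneventful: the move made is legal and does not close a cycle. -/
def Ok (S : Set G) (σ τ : Strategy G) (j : ℕ) : Prop :=
  LegalMove S (hist σ τ j) (moveAt σ τ j) ∧ ¬ ClosesCycle (hist σ τ j) (moveAt σ τ j)

/-- In the play of `σ` against `τ`, the player moving at steps congruent to `p` mod 2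
wins the relator achievement game `REL(G,S)`: at the first eventful step, either it is
that player's turn and they legally close a cycle, or it is the opponent's turn and the
opponent has made an illegal move (in particular, has no legal move). -/
def RelWins (S : Set G) (p : ℕ) (σ τ : Strategy G) : Prop :=
  ∃ k : ℕ, (∀ j < k, Ok S σ τ j) ∧
    ((k % 2 = p ∧ LegalMove S (hist σ τ k) (moveAt σ τ k) ∧
        ClosesCycle (hist σ τ k) (moveAt σ τ k)) ∨
      (k % 2 ≠ p ∧ ¬ LegalMove S (hist σ τ k) (moveAt σ τ k)))

/-- In the play of `σ` against `τ`, the player moving at steps congruent to `p` mod 2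
wins the relator avoidance game `RAV(G,S)`: at the first eventful step it is the
opponent's turn, and the opponent either makes an illegal move (in particular, has no
legal move) or closes a cycle. -/
def RavWins (S : Set G) (p : ℕ) (σ τ : Strategy G) : Prop :=
  ∃ k : ℕ, (∀ j < k, Ok S σ τ j) ∧ k % 2 ≠ p ∧
    (¬ LegalMove S (hist σ τ k) (moveAt σ τ k) ∨ ClosesCycle (hist σ τ k) (moveAt σ τ k))

/-- Player 1 has a winning strategy for `REL(G,S)`. -/
def FirstWinsREL (S : Set G) : Prop :=
  ∃ σ : Strategy G, ∀ τ : Strategy G, RelWins S 0 σ τ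

/-- Player 2 has a winning strategy for `REL(G,S)`. -/
def SecondWinsREL (S : Set G) : Prop :=
  ∃ τ : Strategy G, ∀ σ : Strategy G, RelWins S 1 σ τ

/-- Player 1 has a winning strategy for `RAV(G,S)`. -/
def FirstWinsRAV (S : Set G) : Prop :=
  ∃ σ : Strategy G, ∀ τ : Strategy G, RavWins S 0 σ τ

/-- Player 2 has a winning strategy for `RAV(G,S)`. -/
def SecondWinsRAV (S : Set G) : Prop :=
  ∃ τ : Strategy G, ∀ σ : Strategy G, RavWins S 1 σ τ

end RelatorGames


/-!
Player 1 plays the involution `t = (e_H, s)` at every turn. Since `t = t⁻¹`, the vertices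
visited in the Cayley graph come in pairs `{g, g t}` joined by Player 1's moves, so Player 1's
next move `g ↦ g t` leads to a fresh vertex (the partner of the current vertex is new, or the
current vertex itself would have been visited twice), and it is never the inverse of Player 2's
previous move. Hence Player 1 never loses, and since `G` is finite the play must end.
-/

namespace RelatorGames

section Play

variable {G : Type*}

lemma hist_succ (σ τ : Strategy G) (k : ℕ) :
    hist σ τ (k + 1) = moveAt σ τ k :: hist σ τ k := rfl

lemma hist_suffix_hist (σ τ : Strategy G) {j k : ℕ} (hjk : j ≤ k) :
    hist σ τ j <:+ hist σ τ k := by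
  induction k, hjk using Nat.le_induction with
  | base => exact List.suffix_refl _
  | succ k _ ih => exact ih.trans (List.suffix_cons _ _)

lemma exists_eq_hist_of_suffix (σ τ : Strategy G) {k : ℕ} {l : List G}
    (hl : l <:+ hist σ τ k) : ∃ j ≤ k, l = hist σ τ j := by
  induction k with
  | zero => exact ⟨0, le_rfl, List.suffix_nil.mp hl⟩
  | succ k ih =>
    rcases List.suffix_cons_iff.mp hl with h | h
    · exact ⟨k + 1, le_rfl, h⟩
    · obtain ⟨j, hj, rfl⟩ := ih h
      exact ⟨j, hj.trans k.le_succ, rfl⟩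

end Play

variable {G : Type*} [Group G]

lemma eval_cons (m : G) (h : List G) : eval (m :: h) = eval h * m := by
  simp [eval]

lemma eval_hist_succ (σ τ : Strategy G) (k : ℕ) :
    eval (hist σ τ (k + 1)) = eval (hist σ τ k) * moveAt σ τ k := by
  rw [hist_succ, eval_cons]

lemma closesCycle_hist_iff (σ τ : Strategy G) (k : ℕ) (m : G) :
    ClosesCycle (hist σ τ k) m ↔ ∃ j ≤ k, eval (hist σ τ j) = eval (hist σ τ k) * m := by
  constructor
  · rintro ⟨l, hl, he⟩
    obtain ⟨j, hj, rfl⟩ := exists_eq_hist_of_suffix σ τ hl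
    exact ⟨j, hj, by rwa [eval_cons] at he⟩
  · rintro ⟨j, hj, he⟩
    exact ⟨hist σ τ j, hist_suffix_hist σ τ hj, by rwa [eval_cons]⟩

lemma injOn_eval_hist {S : Set G} {σ τ : Strategy G} {n : ℕ} (hok : ∀ j < n, Ok S σ τ j) :
    Set.InjOn (fun j => eval (hist σ τ j)) (Set.Iic n) := by
  suffices key : ∀ i j, i < j → j ≤ n → eval (hist σ τ i) ≠ eval (hist σ τ j) by
    intro i hi j hj hij
    by_contra hne
    rcases Nat.lt_or_gt_of_ne hne with h | h
    · exact key i j h hj hij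
    · exact key j i h hi hij.symm
  intro i j hij hjn heq
  obtain ⟨k, rfl⟩ : ∃ k, j = k + 1 := ⟨j - 1, by omega⟩
  refine (hok k (by omega)).2 ((closesCycle_hist_iff σ τ k _).mpr ⟨i, by omega, ?_⟩)
  rw [heq, eval_hist_succ]

lemma exists_not_ok [Finite G] (S : Set G) (σ τ : Strategy G) : ∃ k, ¬ Ok S σ τ k := by
  by_contra! hall
  refine not_injective_infinite_finite (fun j => eval (hist σ τ j)) fun i j hij => ?_
  exact injOn_eval_hist (n := max i j) (fun k _ => hall k)
    (le_max_left i j : i ≤ max i j) (le_max_right i j : j ≤ max i j) hij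

lemma ravWins_of_ok {S : Set G} {σ τ : Strategy G} {p : ℕ} [Finite G]
    (h : ∀ n, n % 2 = p → (∀ j < n, Ok S σ τ j) → Ok S σ τ n) : RavWins S p σ τ := by
  classical
  have hex := exists_not_ok S σ τ
  have hmin : ∀ j < Nat.find hex, Ok S σ τ j := fun j hj => not_not.mp (Nat.find_min hex hj)
  have hbad := Nat.find_spec hex
  refine ⟨Nat.find hex, hmin, fun hp => hbad (h _ hp hmin), ?_⟩
  rwa [Ok, not_and_or, not_not] at hbad

section Involution

variable {t : G} (τ : Strategy G)

lemma eval_hist_ne_mul_of_even {S : Set G} (ht2 : t * t = 1) (ht1 : t ≠ 1) {n : ℕ}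
    (hn : n % 2 = 0) (hok : ∀ j < n, Ok S (fun _ => t) τ j) {j : ℕ} (hj : j ≤ n) :
    eval (hist (fun _ => t) τ j) ≠ eval (hist (fun _ => t) τ n) * t := by
  set g := fun j => eval (hist (fun _ => t) τ j)
  have hmove : ∀ k, k % 2 = 0 → g (k + 1) = g k * t := fun k hk => by
    simp only [g, eval_hist_succ, moveAt, hk, if_true]
  intro heq
  rcases hj.lt_or_eq with hj | rfl
  · obtain ⟨j', hj'n, hj'⟩ : ∃ j' < n, g j' = g j * t := by
      rcases Nat.even_or_odd' j with ⟨i, rfl | rfl⟩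
      · exact ⟨2 * i + 1, by omega, hmove _ (by omega)⟩
      · exact ⟨2 * i, by omega, by rw [hmove _ (by omega), mul_assoc, ht2, mul_one]⟩
    have : g j' = g n := by
      change g j = g n * t at heq
      rw [hj', heq, mul_assoc, ht2, mul_one]
    exact hj'n.ne (injOn_eval_hist hok (Set.mem_Iic.mpr hj'n.le) (Set.mem_Iic.mpr le_rfl) this)
  · exact ht1 (by simpa using heq)

lemma ok_const_of_even {S : Set G} (htS : t ∈ S) (ht2 : t * t = 1) (ht1 : t ≠ 1) {n : ℕ}
    (hn : n % 2 = 0) (hok : ∀ j < n, Ok S (fun _ => t) τ j) : Ok S (fun _ => t) τ n := by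
  have hmove : moveAt (fun _ => t) τ n = t := by simp [moveAt, hn]
  have hne : ∀ {j}, j ≤ n → eval (hist _ τ j) ≠ eval (hist _ τ n) * t :=
    eval_hist_ne_mul_of_even τ ht2 ht1 hn hok
  refine ⟨⟨by rw [hmove]; exact Or.inl htS, ?_⟩, ?_⟩
  · -- undoing the previous move `m` would need `t = m⁻¹`, i.e. `m = t`, returning to `g (n - 1)`
    obtain _ | k := n
    · simp [hist]
    rintro p hp hinv
    rw [hist_succ, List.head?_cons, Option.mem_some_iff] at hp
    subst hp
    have hk : moveAt (fun _ => t) τ k = t := by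
      rw [← inv_inv (moveAt _ τ k), ← hinv, hmove, inv_eq_of_mul_eq_one_right ht2]
    refine hne k.le_succ ?_
    rw [eval_hist_succ, hk, mul_assoc, ht2, mul_one]
  · rw [hmove, closesCycle_hist_iff]
    rintro ⟨j, hj, heq⟩
    exact hne hj heq

theorem firstWinsRAV_of_orderOf_eq_two [Finite G] {S : Set G} (htS : t ∈ S)
    (ht : orderOf t = 2) : FirstWinsRAV S := by
  have ht2 : t * t = 1 := by rw [← pow_two, ← ht, pow_orderOf_eq_one]
  have ht1 : t ≠ 1 := by rintro rfl; simp at ht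
  exact ⟨fun _ => t, fun τ => ravWins_of_ok fun _ hn hok => ok_const_of_even τ htS ht2 ht1 hn hok⟩

end Involution

end RelatorGames

open RelatorGames in
theorem rav_semidirect_z2_first_wins_general {H : Type*} [Group H] [Finite H]
    (T : Set H)
    (phi : Multiplicative (ZMod 2) →* MulAut H) :
    FirstWinsRAV
      ((SemidirectProduct.inl '' T ∪
          {SemidirectProduct.inr (Multiplicative.ofAdd (1 : ZMod 2))}) :
        Set (H ⋊[phi] Multiplicative (ZMod 2))) := by
  have : Finite (H ⋊[phi] Multiplicative (ZMod 2)) := .of_equiv _ SemidirectProduct.equivProd.symm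
  refine firstWinsRAV_of_orderOf_eq_two (Or.inr rfl) ?_
  rw [orderOf_injective _ SemidirectProduct.inr_injective, orderOf_ofAdd_eq_addOrderOf,
    ZMod.addOrderOf_one]

open RelatorGames in
/-- For `G = H ⋊ ℤ₂` with generating set
`S = (T × {e}) ∪ {(e_H, s)}`, Player 1 has a winning strategy for `RAV(G,S)`. -/
theorem rav_semidirect_z2_first_wins {H : Type*} [Group H] [Finite H]
    (T : Set H) (hT : Subgroup.closure T = ⊤)
    (phi : Multiplicative (ZMod 2) →* MulAut H) :
    FirstWinsRAV
      ((SemidirectProduct.inl '' T ∪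
          {SemidirectProduct.inr (Multiplicative.ofAdd (1 : ZMod 2))}) :
        Set (H ⋊[phi] Multiplicative (ZMod 2))) :=
  rav_semidirect_z2_first_wins_general T phi
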